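/- Let 𝒞 be a compact subset of ℝⁿ whose convex hull C = conv(𝒞) has nonempty interior. Let F be a uniquely exposed face of C whose barycenter of extreme points is the origin, exposed by the unique halfspace {x : hᵀx ≥ 0} with ‖h‖ = 1. Let ε_ν ↘ 0, let 𝒜_{ε_ν} ⊆ 𝒞 be ε_ν-approximations of 𝒞 and A_{ε_ν} = conv(𝒜_{ε_ν}). Then for all sufficiently small ε_ν, the line span(h) intersects the interior of A_{ε_ν}. -/

import Mathlib

/-!
If the line `ℝ ∙ h` missed `interior C`, a nonzero functional `g` separating them would be
nonnegative on `C` and vanish at `h`. Being nonnegative at the extreme points of `F`, whose sum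
is `0`, it vanishes at each of them and so, by Krein–Milman, on all of `F`; the normalization of
`h + g` would then be a second unit normal exposing `F`. Hence some `t • h` lies in
`interior C`, with `ball (t • h) δ ⊆ C` say.

Since every point of `𝒞` is `ε`-close to `𝒜_ε`, we get `C ⊆ A_ε + closedBall 0 ε`. Separating a
point `z ∉ A_ε` from the closed convex set `A_ε` and pushing `z` by `ε` along the separating
normal shows that this cancels to `ball (t • h) (δ - ε) ⊆ A_ε`, so `t • h ∈ interior A_ε`
as soon as `ε < δ`.
-/

open RealInnerProductSpace Pointwise Set Metric Filter Topology

lemma convexHull_range_eq_image_stdSimplex {M ι : Type*} [AddCommGroup M] [Module ℝ M]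
    [Fintype ι] (z : ι → M) :
    convexHull ℝ (range z) = (fun w => ∑ i, w i • z i) '' stdSimplex ℝ ι := by
  classical
  have hlin : (fun w => ∑ i, w i • z i) = Fintype.linearCombination ℝ z := by
    ext w; simp [Fintype.linearCombination_apply]
  rw [hlin, ← convexHull_basis_eq_stdSimplex, LinearMap.image_convexHull, ← range_comp]
  congr 1
  ext i
  simp [Fintype.linearCombination_apply, ite_smul]

section

variable {E : Type*} [NormedAddCommGroup E] [NormedSpace ℝ E]

theorem isCompact_convexHull [FiniteDimensional ℝ E] {s : Set E} (hs : IsCompact s) :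
    IsCompact (convexHull ℝ s) := by
  obtain rfl | ⟨c, hc⟩ := s.eq_empty_or_nonempty
  · simp
  let N := Module.finrank ℝ E + 1
  -- Carathéodory: every point of the hull is a convex combination of `N` points of `s`
  suffices convexHull ℝ s = (fun p : (Fin N → ℝ) × (Fin N → E) => ∑ i, p.1 i • p.2 i) ''
      (stdSimplex ℝ (Fin N) ×ˢ univ.pi fun _ => s) by
    rw [this]
    exact ((isCompact_stdSimplex ℝ _).prod (isCompact_univ_pi fun _ => hs)).image (by fun_prop)
  refine Subset.antisymm ?_ ?_
  · rw [convexHull_eq_union]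
    simp only [iUnion_subset_iff]
    intro t hts hai x hx
    have hcard : Fintype.card t ≤ Fintype.card (Fin N) := by
      simpa [N] using hai.card_le_finrank_succ.trans
        (Nat.add_le_add_right (Submodule.finrank_le _) 1)
    obtain ⟨e⟩ := Function.Embedding.nonempty_of_card_le hcard
    let z : Fin N → E := Function.extend e Subtype.val fun _ => c
    have hzs : ∀ i, z i ∈ s := by
      intro i
      by_cases hi : ∃ a, e a = i
      · obtain ⟨a, rfl⟩ := hi
        simpa [z, e.injective.extend_apply] using hts a.2
      · simpa [z, Function.extend_apply' _ _ _ hi] using hc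
    have htz : (t : Set E) ⊆ range z := fun y hy =>
      ⟨e ⟨y, hy⟩, e.injective.extend_apply _ _ _⟩
    obtain ⟨w, hw, rfl⟩ := convexHull_range_eq_image_stdSimplex z ▸ convexHull_mono htz hx
    exact ⟨(w, z), ⟨hw, fun i _ => hzs i⟩, rfl⟩
  · rintro _ ⟨⟨w, z⟩, ⟨hw, hz⟩, rfl⟩
    exact mem_convexHull_of_exists_fintype w z hw.1 hw.2 (fun i => hz i trivial) rfl

lemma convexHull_subset_convexHull_add_closedBall {s t : Set E} {ε : ℝ}
    (h : ∀ y ∈ s, ∃ x ∈ t, ‖y - x‖ ≤ ε) :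
    convexHull ℝ s ⊆ convexHull ℝ t + closedBall 0 ε := by
  refine convexHull_min (fun y hy => ?_) ((convex_convexHull ℝ t).add (convex_closedBall 0 ε))
  obtain ⟨x, hx, hxy⟩ := h y hy
  exact ⟨x, subset_convexHull ℝ t hx, y - x, by simpa using hxy, add_sub_cancel x y⟩

end

section

variable {E : Type*} [AddCommGroup E] [Module ℝ E] [TopologicalSpace E] [T2Space E]
  [IsTopologicalAddGroup E] [ContinuousSMul ℝ E] [LocallyConvexSpace ℝ E]

lemma apply_eq_zero_of_nonneg_of_sum_extremePoints_eq_zero {F : Set E} (hF : IsCompact F)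
    (hFc : Convex ℝ F) {k : ℕ} {v : Fin k → E} (hv : F.extremePoints ℝ = range v)
    (hbary : ∑ i, v i = 0) (f : StrongDual ℝ E) (hf : ∀ x ∈ F, 0 ≤ f x) :
    ∀ x ∈ F, f x = 0 := by
  have hvF : ∀ i, v i ∈ F := fun i => extremePoints_subset (hv ▸ mem_range_self i)
  have hfv : ∀ i, f (v i) = 0 := by
    have := (Finset.sum_eq_zero_iff_of_nonneg fun i _ => hf (v i) (hvF i)).1
      (by rw [← map_sum, hbary, map_zero])
    exact fun i => this i (Finset.mem_univ i)
  show F ⊆ {x | f x = 0}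
  rw [← closure_convexHull_extremePoints hF hFc, hv]
  refine closure_minimal (convexHull_min ?_ (convex_hyperplane f.isLinear 0))
    (isClosed_eq f.continuous continuous_const)
  rintro _ ⟨i, rfl⟩
  exact hfv i

end

section

variable {E : Type*} [NormedAddCommGroup E] [InnerProductSpace ℝ E]

/-- Otherwise the normalization of `h + g` would be a second unit normal exposing `F`. -/
lemma eq_zero_of_uniquelyExposed {C F : Set E} {h : E} (hnorm : ‖h‖ = 1)
    (hpos : ∀ x ∈ C, 0 ≤ ⟪h, x⟫) (hF : F = {x ∈ C | ⟪h, x⟫ = 0})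
    (huniq : ∀ (h' : E) (γ' : ℝ), ‖h'‖ = 1 →
      (∀ x ∈ C, γ' ≤ ⟪h', x⟫) → F = {x ∈ C | ⟪h', x⟫ = γ'} → h' = h ∧ γ' = 0)
    {g : E} (hgC : ∀ x ∈ C, 0 ≤ ⟪g, x⟫) (hgF : ∀ x ∈ F, ⟪g, x⟫ = 0) (hgh : ⟪g, h⟫ = 0) :
    g = 0 := by
  have hhh : ⟪h, h⟫ = 1 := by rw [real_inner_self_eq_norm_sq, hnorm, one_pow]
  have hk : h + g ≠ 0 := fun hk => by
    simpa only [inner_add_left, hhh, hgh, add_zero, inner_zero_left, one_ne_zero] using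
      congrArg (⟪·, h⟫) hk
  have hc : 0 < ‖h + g‖⁻¹ := inv_pos.2 (norm_pos_iff.2 hk)
  have hexposes : F = {x ∈ C | ⟪‖h + g‖⁻¹ • (h + g), x⟫ = 0} := by
    rw [hF]
    ext x
    simp only [mem_ofPred_eq, real_inner_smul_left, inner_add_left, mul_eq_zero, hc.ne',
      false_or, and_congr_right_iff]
    intro hx
    constructor
    · intro hhx
      rw [hhx, hgF x (hF ▸ ⟨hx, hhx⟩), add_zero]
    · intro hsum
      linarith [hpos x hx, hgC x hx]
  obtain ⟨heq, -⟩ := huniq _ 0 (norm_smul_inv_norm hk)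
    (fun x hx => by
      rw [real_inner_smul_left, inner_add_left]
      exact mul_nonneg hc.le (add_nonneg (hpos x hx) (hgC x hx)))
    hexposes
  have hg : ‖h + g‖⁻¹ * ‖g‖ ^ 2 = 0 := by
    simpa only [RCLike.ofReal_real_eq_id, id_eq, real_inner_smul_left, inner_add_left,
      real_inner_comm g h, hgh, zero_add,
      real_inner_self_eq_norm_sq] using congrArg (⟪·, g⟫) heq
  simpa [hc.ne'] using hg

variable [CompleteSpace E]

lemma exists_ne_zero_inner_nonneg_of_disjoint_interior {C : Set E}
    (hC : Convex ℝ C) (hCint : (interior C).Nonempty) (V : Submodule ℝ E)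
    (hV : Disjoint (interior C) V) :
    ∃ g : E, g ≠ 0 ∧ (∀ x ∈ C, 0 ≤ ⟪g, x⟫) ∧ ∀ y ∈ V, ⟪g, y⟫ = 0 := by
  obtain ⟨f, u, hf0, hfC, hfV⟩ :=
    geometric_hahn_banach_of_nonempty_interior hC V.convex hV hCint ⟨0, V.zero_mem⟩
  -- a functional bounded below on a subspace vanishes on it
  have hfV0 : ∀ y ∈ V, f y = 0 := by
    intro y hy
    by_contra hfy
    have := hfV _ (V.smul_mem ((u - 1) / f y) hy)
    rw [map_smul, smul_eq_mul, div_mul_cancel₀ _ hfy] at this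
    linarith
  have hu : u ≤ 0 := by simpa using hfV 0 V.zero_mem
  refine ⟨-(InnerProductSpace.toDual ℝ E).symm f, by simpa using hf0, fun x hx => ?_,
    fun y hy => ?_⟩
  · rw [inner_neg_left, InnerProductSpace.toDual_symm_apply]
    linarith [hfC x hx]
  · rw [inner_neg_left, InnerProductSpace.toDual_symm_apply, hfV0 y hy, neg_zero]

theorem exists_smul_mem_interior_of_uniquelyExposed {C F : Set E} (hC : IsCompact C)
    (hCc : Convex ℝ C) (hCint : (interior C).Nonempty) {k : ℕ} {v : Fin k → E}
    (hv : F.extremePoints ℝ = range v) (hbary : ∑ i, v i = 0) {h : E} (hnorm : ‖h‖ = 1)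
    (hpos : ∀ x ∈ C, 0 ≤ ⟪h, x⟫) (hF : F = {x ∈ C | ⟪h, x⟫ = 0})
    (huniq : ∀ (h' : E) (γ' : ℝ), ‖h'‖ = 1 →
      (∀ x ∈ C, γ' ≤ ⟪h', x⟫) → F = {x ∈ C | ⟪h', x⟫ = γ'} → h' = h ∧ γ' = 0) :
    ∃ t : ℝ, t • h ∈ interior C := by
  by_contra! hno
  obtain ⟨g, hg0, hgC, hgh⟩ := exists_ne_zero_inner_nonneg_of_disjoint_interior hCc hCint
    (Submodule.span ℝ {h}) <| disjoint_left.2 fun x hx hxh => by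
      obtain ⟨t, rfl⟩ := Submodule.mem_span_singleton.1 hxh
      exact hno t hx
  have hFC : F = C ∩ {x | innerSL ℝ h x = 0} := hF
  have hFcompact : IsCompact F :=
    hFC ▸ hC.inter_right (isClosed_eq (innerSL ℝ h).continuous continuous_const)
  have hFconv : Convex ℝ F := hFC ▸ hCc.inter (convex_hyperplane (innerSL ℝ h).isLinear 0)
  have hgF := apply_eq_zero_of_nonneg_of_sum_extremePoints_eq_zero hFcompact hFconv hv hbary
    (innerSL ℝ g) fun x hx => hgC x (hFC ▸ hx).1
  exact hg0 (eq_zero_of_uniquelyExposed hnorm hpos hF huniq hgC hgF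
    (hgh h (Submodule.mem_span_singleton_self h)))

lemma Convex.ball_subset_of_ball_subset_add_closedBall {A : Set E} (hA : Convex ℝ A)
    (hAc : IsClosed A) {p : E} {δ ε : ℝ} (hε : 0 ≤ ε) (h : ball p δ ⊆ A + closedBall 0 ε) :
    ball p (δ - ε) ⊆ A := by
  intro z hz
  by_contra hzA
  obtain ⟨f, u, hfA, hfz⟩ := geometric_hahn_banach_closed_point hA hAc hzA
  set w := (InnerProductSpace.toDual ℝ E).symm f
  have hf : ∀ x, f x = ⟪w, x⟫ := fun x => InnerProductSpace.toDual_symm_apply.symm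
  -- moving `z` by `ε` towards `w` stays in the ball, but gains `ε ‖w‖` in `f`
  set d := ‖w‖⁻¹ • w
  have hd : ‖d‖ ≤ 1 := by
    rcases eq_or_ne w 0 with hw | hw
    · simp [d, hw]
    · exact (norm_smul_inv_norm hw).le
  have hwd : ⟪w, d⟫ = ‖w‖ := by
    rw [real_inner_smul_right, real_inner_self_eq_norm_sq, sq, ← mul_assoc, inv_mul_mul_self]
  have hzd : z + ε • d ∈ ball p δ := by
    rw [mem_ball, dist_eq_norm] at hz ⊢
    calc ‖z + ε • d - p‖ = ‖(z - p) + ε • d‖ := by congr 1; abel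
      _ ≤ ‖z - p‖ + ε * ‖d‖ := by
          simpa [norm_smul, abs_of_nonneg hε] using norm_add_le (z - p) (ε • d)
      _ < δ - ε + ε * 1 := add_lt_add_of_lt_of_le hz (mul_le_mul_of_nonneg_left hd hε)
      _ = δ := by ring
  obtain ⟨a, ha, b, hb, hab⟩ := h hzd
  have hwb : ⟪w, b⟫ ≤ ‖w‖ * ε := (real_inner_le_norm w b).trans
    (mul_le_mul_of_nonneg_left (mem_closedBall_zero_iff.1 hb) (norm_nonneg w))
  have hfab : f z + ε * ‖w‖ = f a + ⟪w, b⟫ := by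
    rw [hf, hf, ← inner_add_right, show a + b = z + ε • d from hab, inner_add_right,
      real_inner_smul_right, hwd]
  linarith [hfA a ha]

lemma mem_interior_of_ball_subset_add_closedBall {A : Set E} (hA : Convex ℝ A)
    (hAc : IsClosed A) {p : E} {δ ε : ℝ} (hε : 0 ≤ ε) (hεδ : ε < δ)
    (h : ball p δ ⊆ A + closedBall 0 ε) : p ∈ interior A :=
  mem_interior.2 ⟨_, hA.ball_subset_of_ball_subset_add_closedBall hAc hε h, isOpen_ball,
    mem_ball_self (sub_pos.2 hεδ)⟩

lemma eventually_mem_interior_convexHull_of_approx {ι : Type*} {l : Filter ι} {s : Set E}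
    {t : ι → Set E} {ε : ι → ℝ} {p : E} (hp : p ∈ interior (convexHull ℝ s))
    (hε : ∀ i, 0 ≤ ε i) (hεl : Tendsto ε l (𝓝 0)) (ht : ∀ i, (t i).Finite)
    (happrox : ∀ i, ∀ y ∈ s, ∃ x ∈ t i, ‖y - x‖ ≤ ε i) :
    ∀ᶠ i in l, p ∈ interior (convexHull ℝ (t i)) := by
  obtain ⟨δ, hδ, hball⟩ := isOpen_iff.1 isOpen_interior p hp
  filter_upwards [hεl.eventually_lt_const hδ] with i hi
  exact mem_interior_of_ball_subset_add_closedBall (convex_convexHull ℝ _)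
    ((ht i).isClosed_convexHull (𝕜 := ℝ)) (hε i) hi
    ((hball.trans interior_subset).trans
      (convexHull_subset_convexHull_add_closedBall (happrox i)))

end

theorem span_of_normal_meets_interior_of_approximating_polytopes_general
    (n k : ℕ) (𝒞 : Set (EuclideanSpace ℝ (Fin n))) (h𝒞 : IsCompact 𝒞)
    (C : Set (EuclideanSpace ℝ (Fin n))) (hC : C = convexHull ℝ 𝒞)
    (hCint : (interior C).Nonempty)
    (F : Set (EuclideanSpace ℝ (Fin n)))
    (v : Fin (k + 1) → EuclideanSpace ℝ (Fin n))
    (hv : Set.extremePoints ℝ F = Set.range v)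
    -- the barycenter of the extreme points of `F` is the origin
    (hbary : ∑ i, v i = 0)
    (h : EuclideanSpace ℝ (Fin n)) (hnorm : ‖h‖ = 1)
    (hpos : ∀ x ∈ C, 0 ≤ ⟪h, x⟫)
    (hF : F = {x ∈ C | ⟪h, x⟫ = 0})
    -- `F` is uniquely exposed: `(h, 0)` is the only exposing pair
    (huniq : ∀ (h' : EuclideanSpace ℝ (Fin n)) (γ' : ℝ), ‖h'‖ = 1 →
      (∀ x ∈ C, γ' ≤ ⟪h', x⟫) → F = {x ∈ C | ⟪h', x⟫ = γ'} → h' = h ∧ γ' = 0)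
    (ε : ℕ → ℝ) (hεpos : ∀ ν, 0 < ε ν)
    (hεlim : Filter.Tendsto ε Filter.atTop (nhds 0))
    (𝒜 : ℕ → Set (EuclideanSpace ℝ (Fin n)))
    (h𝒜fin : ∀ ν, (𝒜 ν).Finite)
    (h𝒜approx : ∀ ν, ∀ y ∈ 𝒞, ∃ x ∈ 𝒜 ν, ‖y - x‖ ≤ ε ν)
    (A : ℕ → Set (EuclideanSpace ℝ (Fin n)))
    (hA : ∀ ν, A ν = convexHull ℝ (𝒜 ν)) :
    ∃ ν₀ : ℕ, ∀ ν ≥ ν₀, ∃ t : ℝ, t • h ∈ interior (A ν) := by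
  subst hC
  obtain ⟨t, ht⟩ := exists_smul_mem_interior_of_uniquelyExposed (isCompact_convexHull h𝒞)
    (convex_convexHull ℝ 𝒞) hCint hv hbary hnorm hpos hF huniq
  obtain ⟨ν₀, hν₀⟩ := eventually_atTop.1 <| eventually_mem_interior_convexHull_of_approx ht
    (fun ν => (hεpos ν).le) hεlim h𝒜fin h𝒜approx
  exact ⟨ν₀, fun ν hν => ⟨t, hA ν ▸ hν₀ ν hν⟩⟩

/-- Let `𝒞` be compact in `ℝⁿ` with `C = conv 𝒞` full-dimensional.  Let
`F` be a uniquely exposed face of `C` whose barycenter of extreme points is the origin,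
exposed by the unique halfspace `{x : ⟪h,x⟫ ≥ 0}` with `‖h‖ = 1`.  Let `ε ν ↘ 0` and let
`𝒜 ν ⊆ 𝒞` be `ε ν`-approximations with `A ν = conv (𝒜 ν)`.  Then for all sufficiently
small `ε ν`, the line spanned by `h` meets the interior of `A ν`. -/
theorem span_of_normal_meets_interior_of_approximating_polytopes
    (n k : ℕ) (𝒞 : Set (EuclideanSpace ℝ (Fin n))) (h𝒞 : IsCompact 𝒞)
    (C : Set (EuclideanSpace ℝ (Fin n))) (hC : C = convexHull ℝ 𝒞)
    (hCint : (interior C).Nonempty)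
    (F : Set (EuclideanSpace ℝ (Fin n))) (hFface : IsExtreme ℝ C F)
    (v : Fin (k + 1) → EuclideanSpace ℝ (Fin n))
    (hv : Set.extremePoints ℝ F = Set.range v)
    -- the barycenter of the extreme points of `F` is the origin
    (hbary : ∑ i, v i = 0)
    (h : EuclideanSpace ℝ (Fin n)) (hnorm : ‖h‖ = 1)
    (hpos : ∀ x ∈ C, 0 ≤ ⟪h, x⟫)
    (hF : F = {x ∈ C | ⟪h, x⟫ = 0})
    -- `F` is uniquely exposed: `(h, 0)` is the only exposing pair
    (huniq : ∀ (h' : EuclideanSpace ℝ (Fin n)) (γ' : ℝ), ‖h'‖ = 1 →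
      (∀ x ∈ C, γ' ≤ ⟪h', x⟫) → F = {x ∈ C | ⟪h', x⟫ = γ'} → h' = h ∧ γ' = 0)
    (ε : ℕ → ℝ) (hεpos : ∀ ν, 0 < ε ν) (hεanti : StrictAnti ε)
    (hεlim : Filter.Tendsto ε Filter.atTop (nhds 0))
    (𝒜 : ℕ → Set (EuclideanSpace ℝ (Fin n)))
    (h𝒜fin : ∀ ν, (𝒜 ν).Finite) (h𝒜sub : ∀ ν, 𝒜 ν ⊆ 𝒞)
    (h𝒜approx : ∀ ν, ∀ y ∈ 𝒞, ∃ x ∈ 𝒜 ν, ‖y - x‖ ≤ ε ν)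
    (A : ℕ → Set (EuclideanSpace ℝ (Fin n)))
    (hA : ∀ ν, A ν = convexHull ℝ (𝒜 ν)) :
    ∃ ν₀ : ℕ, ∀ ν ≥ ν₀, ∃ t : ℝ, t • h ∈ interior (A ν) :=
  span_of_normal_meets_interior_of_approximating_polytopes_general n k 𝒞 h𝒞 C hC hCint F v hv hbary
    h hnorm hpos hF huniq ε hεpos hεlim 𝒜 h𝒜fin h𝒜approx A hA
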